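/- Let a₁⁺, a₁⁻, b₂⁺, b₂⁻, α, β, γ, δ : ℤ × ℤ → ℂ satisfy a₁⁺(n,m+1) = α(n,m) a₁⁺(n,m), b₂⁺(n+1,m) = δ(n,m) b₂⁺(n,m), a₁⁺ a₁⁻ = 1, b₂⁺ b₂⁻ = 1, α² = δ², αδ − βγ = α/δ, with α, δ nowhere zero. If additionally a₁⁺(n,m+1) · b₂⁻(n+1,m) = a₁⁺(n,m) · b₂⁻(n,m) at every point, then α = δ and αδ − βγ = 1. -/
import Mathlib


/-- The sign-fixing gauge normalization (t₂a₁⁺)(t₁b₂⁻) = a₁⁺ b₂⁻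
forces α = δ and αδ − βγ = 1. -/
theorem sign_fixing_gauge
    (a₁p a₁m b₂p b₂m α β γ δ : ℤ × ℤ → ℂ)
    (e1 : ∀ n m : ℤ, a₁p (n, m + 1) = α (n, m) * a₁p (n, m))
    (e5 : ∀ n m : ℤ, b₂p (n + 1, m) = δ (n, m) * b₂p (n, m))
    (norm1 : ∀ p : ℤ × ℤ, a₁p p * a₁m p = 1)
    (norm2 : ∀ p : ℤ × ℤ, b₂p p * b₂m p = 1)
    (hsq : ∀ p : ℤ × ℤ, α p ^ 2 = δ p ^ 2)
    (hdet : ∀ p : ℤ × ℤ, α p * δ p - β p * γ p = α p / δ p)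
    (hα : ∀ p : ℤ × ℤ, α p ≠ 0) (hδ : ∀ p : ℤ × ℤ, δ p ≠ 0)
    (hgauge : ∀ n m : ℤ, a₁p (n, m + 1) * b₂m (n + 1, m) = a₁p (n, m) * b₂m (n, m)) :
    ∀ p : ℤ × ℤ, α p = δ p ∧ α p * δ p - β p * γ p = 1 := by
  rintro ⟨n, m⟩
  have ha : a₁p (n, m) ≠ 0 := left_ne_zero_of_mul_eq_one (norm1 (n, m))
  have hb : b₂p (n, m) ≠ 0 := left_ne_zero_of_mul_eq_one (norm2 (n, m))
  have key : α (n, m) = δ (n, m) := by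
    have h := hgauge n m
    rw [e1 n m] at h
    -- multiply both sides by b₂p (n+1, m)
    have h2 := congrArg (· * b₂p (n + 1, m)) h
    rw [e5 n m] at h2
    have hb1 : b₂m (n + 1, m) * (δ (n, m) * b₂p (n, m)) = 1 := by
      have := norm2 (n + 1, m); rw [e5 n m] at this; linear_combination this
    have hb2 : b₂m (n, m) * b₂p (n, m) = 1 := by linear_combination norm2 (n, m)
    have h3 : α (n, m) * a₁p (n, m) = a₁p (n, m) * δ (n, m) := by
      have lhs : α (n, m) * a₁p (n, m) * b₂m (n + 1, m) * (δ (n, m) * b₂p (n, m))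
          = α (n, m) * a₁p (n, m) := by
        rw [mul_assoc, hb1, mul_one]
      have rhs : a₁p (n, m) * b₂m (n, m) * (δ (n, m) * b₂p (n, m))
          = a₁p (n, m) * δ (n, m) := by
        linear_combination a₁p (n, m) * δ (n, m) * hb2
      rw [lhs, rhs] at h2; exact h2
    have := mul_right_cancel₀ ha (by linear_combination h3 :
      α (n, m) * a₁p (n, m) = δ (n, m) * a₁p (n, m))
    exact this
  refine ⟨key, ?_⟩
  rw [hdet (n, m), key, div_self (hδ (n, m))]
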